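/- Let n ≥ 1, t0 ∈ ℝ, y0 ∈ ℝ^n, a > 0. If f : [t0, t0+a] × ℝ^n → ℝ^n is continuous and bounded, then there exists a differentiable function φ : [t0, t0+a] → ℝ^n with φ(t0) = y0 and φ'(t) = f(t, φ(t)) for all t ∈ [t0, t0+a]. -/

import Mathlib

/-!
Extend `f` beyond `[t0, t0 + a]` by clamping the time variable. For a delay `ε > 0`, Tonelli's
approximation `g t = y0` for `t ≤ t0`, `g t = y0 + ∫ s in t0..t, F s (g (s - ε))` for `t ≥ t0` is
defined step by step on intervals of length `ε`, and is `M`-Lipschitz when `‖F‖ ≤ M`. By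
Arzelà–Ascoli a sequence of these approximations with `ε → 0` has a subsequence converging
pointwise on `[t0, t0 + a]`; equi-Lipschitz continuity absorbs the delay, so by dominated
convergence the limit solves the integral equation `φ t = y0 + ∫ s in t0..t, F s (φ s)`, and
hence the differential equation.
-/

open Set Filter Topology MeasureTheory intervalIntegral BoundedContinuousFunction
open scoped NNReal Interval

section Tonelli

variable {E : Type*} [NormedAddCommGroup E] [NormedSpace ℝ E]
  (F : ℝ → E → E) (t0 : ℝ) (y0 : E) (ε : ℝ)

/-- Iterates of the delayed integral operator; the `m`-th iterate no longer changes on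
`t ≤ t0 + m * ε` (`tonelliApprox_succ_of_le`), where it is Tonelli's approximation. -/
noncomputable def tonelliApprox : ℕ → ℝ → E
  | 0 => fun _ => y0
  | m + 1 => fun t => y0 + ∫ s in t0..max t t0, F s (tonelliApprox m (s - ε))

variable {F t0 y0 ε}

theorem tonelliApprox_of_le {t : ℝ} (ht : t ≤ t0) (m : ℕ) : tonelliApprox F t0 y0 ε m t = y0 := by
  cases m with
  | zero => rfl
  | succ m => simp [tonelliApprox, max_eq_right ht]

theorem lipschitzWith_tonelliApprox {M : ℝ≥0}
    (hF : Continuous fun p : ℝ × E => F p.1 p.2) (hFM : ∀ t y, ‖F t y‖ ≤ M) (m : ℕ) :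
    LipschitzWith M (tonelliApprox F t0 y0 ε m) := by
  induction m with
  | zero => exact (LipschitzWith.const y0).weaken zero_le
  | succ m ih =>
    have hG : Continuous fun s => F s (tonelliApprox F t0 y0 ε m (s - ε)) :=
      hF.comp (continuous_id.prodMk (ih.continuous.comp (continuous_sub_right ε)))
    refine LipschitzWith.of_dist_le_mul fun u v => ?_
    simp only [tonelliApprox, dist_eq_norm, add_sub_add_left_eq_sub]
    rw [integral_interval_sub_left (hG.intervalIntegrable _ _) (hG.intervalIntegrable _ _)]
    calc _ ≤ M * |max u t0 - max v t0| := norm_integral_le_of_norm_le_const fun s _ => hFM _ _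
      _ ≤ M * |u - v| := mul_le_mul_of_nonneg_left (abs_max_sub_max_le_abs u v t0) M.2

theorem tonelliApprox_succ_of_le (hε : 0 ≤ ε) (m : ℕ) {t : ℝ} (ht : t ≤ t0 + m * ε) :
    tonelliApprox F t0 y0 ε (m + 1) t = tonelliApprox F t0 y0 ε m t := by
  induction m generalizing t with
  | zero =>
    simp only [CharP.cast_eq_zero, zero_mul, add_zero] at ht
    exact tonelliApprox_of_le ht 1
  | succ m ih =>
    refine congrArg (y0 + ·) (integral_congr fun s hs => ?_)
    rw [uIcc_of_le (le_max_right t t0)] at hs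
    have hs' : s ≤ t0 + (m + 1) * ε := by
      push_cast at ht
      exact hs.2.trans (max_le ht (le_add_of_nonneg_right (by positivity)))
    simp only [ih (by linarith : s - ε ≤ t0 + m * ε)]

theorem tonelliApprox_eq_integral (hε : 0 ≤ ε) {m : ℕ} {t : ℝ} (ht₀ : t0 ≤ t)
    (ht : t ≤ t0 + m * ε) :
    tonelliApprox F t0 y0 ε m t = y0 + ∫ s in t0..t, F s (tonelliApprox F t0 y0 ε m (s - ε)) := by
  rw [← tonelliApprox_succ_of_le hε m ht]
  simp only [tonelliApprox, max_eq_left ht₀]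

end Tonelli

section Limit

variable {X : Type*} [MetricSpace X]

theorem exists_subseq_tendsto_of_lipschitzWith [ProperSpace X] {g : ℕ → ℝ → X} {K : ℝ≥0}
    {a b : ℝ} {x : X} (hab : a ≤ b) (hg : ∀ k, LipschitzWith K (g k)) (hga : ∀ k, g k a = x) :
    ∃ φ : ℝ → X, Continuous φ ∧ ∃ σ : ℕ → ℕ, StrictMono σ ∧
      ∀ t ∈ Icc a b, Tendsto (fun j => g (σ j) t) atTop (𝓝 (φ t)) := by
  let u : ℕ → Icc a b →ᵇ X := fun k =>
    .mkOfCompact ⟨fun t => g k t, (hg k).continuous.comp continuous_subtype_val⟩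
  have hequi : Equicontinuous ((↑) : range u → Icc a b → X) := by
    refine Metric.equicontinuous_of_continuity_modulus (fun d => K * d) ?_ _ ?_
    · simpa using (tendsto_id (x := 𝓝 (0 : ℝ))).const_mul (K : ℝ)
    · rintro s t ⟨-, k, rfl⟩
      exact (hg k).dist_le_mul s t
  have hbound : ∀ k (t : Icc a b), u k t ∈ Metric.closedBall x (K * (b - a)) := by
    intro k t
    rw [Metric.mem_closedBall, ← hga k]
    calc dist (g k t) (g k a) ≤ K * dist (t : ℝ) a := (hg k).dist_le_mul _ _
      _ ≤ K * (b - a) := by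
        gcongr
        rw [Real.dist_eq, abs_of_nonneg (sub_nonneg.2 t.2.1)]
        linarith [t.2.2]
  have hcomp : IsCompact (closure (range u)) :=
    BoundedContinuousFunction.arzela_ascoli _ (isCompact_closedBall _ _) _
      (by rintro - t ⟨k, rfl⟩; exact hbound k t) hequi
  obtain ⟨ψ, -, σ, hσ, hlim⟩ := hcomp.tendsto_subseq fun k => subset_closure (mem_range_self k)
  refine ⟨IccExtend hab ψ, ψ.continuous.Icc_extend', σ, hσ, fun t ht => ?_⟩
  rw [IccExtend_of_mem hab ψ ht]
  exact ((continuous_eval_const ⟨t, ht⟩).tendsto ψ).comp hlim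

theorem tendsto_apply_sub_of_lipschitzWith {g : ℕ → ℝ → X} {K : ℝ≥0} {ε : ℕ → ℝ} {s : ℝ}
    {y : X} (hg : ∀ j, LipschitzWith K (g j)) (hε : Tendsto ε atTop (𝓝 0))
    (hs : Tendsto (fun j => g j s) atTop (𝓝 y)) :
    Tendsto (fun j => g j (s - ε j)) atTop (𝓝 y) := by
  have hshift : Tendsto (fun j => dist (g j (s - ε j)) (g j s)) atTop (𝓝 0) := by
    refine squeeze_zero (fun _ => dist_nonneg) (fun j => (hg j).dist_le_mul _ _) ?_
    simpa [Real.dist_eq] using (hε.abs.const_mul (K : ℝ))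
  exact tendsto_iff_dist_tendsto_zero.2 <| squeeze_zero (fun _ => dist_nonneg)
    (fun j => dist_triangle _ (g j s) _)
    (by simpa using hshift.add (tendsto_iff_dist_tendsto_zero.1 hs))

end Limit

theorem tendsto_intervalIntegral_comp_of_tendsto {X E : Type*} [TopologicalSpace X]
    [NormedAddCommGroup E] [NormedSpace ℝ E] {F : ℝ → X → E} {M : ℝ}
    (hF : Continuous fun p : ℝ × X => F p.1 p.2) (hFM : ∀ t y, ‖F t y‖ ≤ M)
    {h : ℕ → ℝ → X} {φ : ℝ → X} {a b : ℝ} (hh : ∀ j, Continuous (h j))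
    (hlim : ∀ s ∈ Ι a b, Tendsto (fun j => h j s) atTop (𝓝 (φ s))) :
    Tendsto (fun j => ∫ s in a..b, F s (h j s)) atTop (𝓝 (∫ s in a..b, F s (φ s))) :=
  tendsto_integral_filter_of_dominated_convergence (fun _ => M)
    (.of_forall fun j => (hF.comp (continuous_id.prodMk (hh j))).aestronglyMeasurable)
    (.of_forall fun _ => ae_of_all _ fun _ _ => hFM _ _) intervalIntegrable_const
    (ae_of_all _ fun s hs => (hF.tendsto _).comp (tendsto_const_nhds.prodMk_nhds (hlim s hs)))

section IntegralEquation

variable {E : Type*} [NormedAddCommGroup E] [NormedSpace ℝ E]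

theorem exists_continuous_eq_integral [ProperSpace E] {F : ℝ → E → E} {M : ℝ≥0}
    (hF : Continuous fun p : ℝ × E => F p.1 p.2) (hFM : ∀ t y, ‖F t y‖ ≤ M) (t0 : ℝ) (y0 : E)
    {a : ℝ} (ha : 0 < a) :
    ∃ φ : ℝ → E, Continuous φ ∧ ∀ t ∈ Icc t0 (t0 + a), φ t = y0 + ∫ s in t0..t, F s (φ s) := by
  set ε : ℕ → ℝ := fun k => a / (k + 1)
  have hε_nonneg : ∀ k, 0 ≤ ε k := fun k => by positivity
  have hε : Tendsto ε atTop (𝓝 0) := by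
    simpa [ε, mul_one_div, div_eq_mul_inv] using
      tendsto_one_div_add_atTop_nhds_zero_nat.const_mul a
  set g : ℕ → ℝ → E := fun k => tonelliApprox F t0 y0 (ε k) (k + 1)
  have hg : ∀ k, LipschitzWith M (g k) := fun k => lipschitzWith_tonelliApprox hF hFM _
  have hg_eq : ∀ k, ∀ t ∈ Icc t0 (t0 + a), g k t = y0 + ∫ s in t0..t, F s (g k (s - ε k)) := by
    refine fun k t ht => tonelliApprox_eq_integral (hε_nonneg k) ht.1 ?_
    have : ((k + 1 : ℕ) : ℝ) * ε k = a := by simp only [ε]; push_cast; field_simp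
    linarith [ht.2]
  obtain ⟨φ, hφ, σ, hσ, hlim⟩ := exists_subseq_tendsto_of_lipschitzWith
    (by linarith : t0 ≤ t0 + a) hg fun k => tonelliApprox_of_le le_rfl _
  refine ⟨φ, hφ, fun t ht => tendsto_nhds_unique (hlim t ht) ?_⟩
  simp_rw [hg_eq _ t ht]
  refine tendsto_const_nhds.add (tendsto_intervalIntegral_comp_of_tendsto hF hFM
    (fun j => (hg _).continuous.comp (continuous_sub_right _)) fun s hs => ?_)
  rw [uIoc_of_le ht.1] at hs
  exact tendsto_apply_sub_of_lipschitzWith (fun j => hg (σ j)) (hε.comp hσ.tendsto_atTop)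
    (hlim s ⟨hs.1.le, hs.2.trans ht.2⟩)

theorem hasDerivWithinAt_of_eq_integral [CompleteSpace E] {φ G : ℝ → E} {s : Set ℝ}
    {t0 t : ℝ} {y0 : E} (hG : Continuous G) (hφ : ∀ u ∈ s, φ u = y0 + ∫ v in t0..u, G v)
    (ht : t ∈ s) : HasDerivWithinAt φ (G t) s t :=
  ((integral_hasDerivAt_right (hG.intervalIntegrable _ _) (hG.stronglyMeasurableAtFilter _ _)
    hG.continuousAt).const_add y0).hasDerivWithinAt.congr hφ (hφ t ht)

end IntegralEquation

theorem continuous_comp_projIcc_of_continuousOn {α X Y : Type*} [LinearOrder α]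
    [TopologicalSpace α] [OrderTopology α] [TopologicalSpace X] [TopologicalSpace Y]
    {f : α → X → Y} {a b : α} (hab : a ≤ b)
    (hf : ContinuousOn (fun p : α × X => f p.1 p.2) (Icc a b ×ˢ univ)) :
    Continuous fun p : α × X => f (projIcc a b hab p.1) p.2 :=
  hf.comp_continuous
    ((continuous_subtype_val.comp ((continuous_projIcc (h := hab)).comp continuous_fst)).prodMk
      continuous_snd)
    fun p => ⟨(projIcc a b hab p.1).2, mem_univ _⟩

theorem peano_bounded_global (n : ℕ) (t0 : ℝ) (y0 : Fin n → ℝ)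
    (a : ℝ) (ha : 0 < a)
    (f : ℝ → (Fin n → ℝ) → (Fin n → ℝ))
    (hf : ContinuousOn (fun p : ℝ × (Fin n → ℝ) => f p.1 p.2)
      (Icc t0 (t0 + a) ×ˢ (univ : Set (Fin n → ℝ))))
    (hbdd : ∃ M : ℝ, ∀ t ∈ Icc t0 (t0 + a), ∀ y : Fin n → ℝ, ‖f t y‖ ≤ M) :
    ∃ φ : ℝ → Fin n → ℝ,
      φ t0 = y0 ∧
      ∀ t ∈ Icc t0 (t0 + a),
        HasDerivWithinAt φ (f t (φ t)) (Icc t0 (t0 + a)) t := by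
  obtain ⟨M, hM⟩ := hbdd
  have h0a : t0 ≤ t0 + a := by linarith
  let F t y := f (projIcc t0 (t0 + a) h0a t) y
  have hF : Continuous fun p : ℝ × (Fin n → ℝ) => F p.1 p.2 :=
    continuous_comp_projIcc_of_continuousOn h0a hf
  have hFM : ∀ t y, ‖F t y‖ ≤ M.toNNReal := fun t y =>
    (hM _ (projIcc _ _ h0a t).2 y).trans (Real.le_coe_toNNReal M)
  obtain ⟨φ, hφ, hφ_eq⟩ := exists_continuous_eq_integral hF hFM t0 y0 ha
  refine ⟨φ, by simpa using hφ_eq t0 ⟨le_rfl, h0a⟩, fun t ht => ?_⟩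
  simpa [F, projIcc_of_mem h0a ht] using
    hasDerivWithinAt_of_eq_integral (hF.comp (continuous_id.prodMk hφ)) hφ_eq ht
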